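/- arXiv:1404.2719 — 2 statements merged into one kernel-verified Lean document; each statement's English description precedes it below -/
import Mathlib

section
/- Let n ≥ 1 be an integer, let K ⊆ ℝ^{n+1} be a compact set, let y ∈ ℝ^{n+1} and let 0 < m ≤ M be real numbers such that the closed ball of radius m around y is contained in K and K is contained in the closed ball of radius M around y. Let S denote the sphere {z ∈ ℝ^{n+1} : ‖z − y‖ = (m + M)/2}. Then the frontier (topological boundary) ∂K of K is a nonempty compact set and the Hausdorff distance between ∂K and S is at most (M − m)/2. -/
/-!
Since `closedBall y m ⊆ K ⊆ closedBall y M`, every frontier point of `K` lies in the closed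
annulus `m ≤ ‖x - y‖ ≤ M`, and every ray from `y` meets `∂K`, because the ray starts inside
`K` and leaves it. Radial projection therefore matches each point of `∂K` with a point of the
middle sphere on the same ray and vice versa, and two points on a ray whose distances to `y`
lie in `[m, M]` and equal `(m + M)/2` respectively are at most `(M - m)/2` apart.
-/

open Metric Set

theorem IsPreconnected.inter_frontier_nonempty {X : Type*} [TopologicalSpace X] {s t : Set X}
    (hs : IsPreconnected s) (hin : (s ∩ t).Nonempty) (hout : (s \ t).Nonempty) :
    (s ∩ frontier t).Nonempty := by
  have := Subtype.preconnectedSpace hs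
  obtain ⟨a, has, hat⟩ := hin
  obtain ⟨b, hbs, hbt⟩ := hout
  obtain ⟨x, hx⟩ := (nonempty_frontier_iff (s := (Subtype.val ⁻¹' t : Set s))).2
    ⟨⟨⟨a, has⟩, hat⟩, fun h => hbt (eq_univ_iff_forall.1 h ⟨b, hbs⟩)⟩
  exact ⟨x, x.2, continuous_subtype_val.frontier_preimage_subset t hx⟩

theorem dist_mem_Icc_of_mem_frontier {X : Type*} [PseudoMetricSpace X] {K : Set X} {x y : X}
    {m M : ℝ} (hball : ball y m ⊆ K) (hsub : K ⊆ closedBall y M) (hx : x ∈ frontier K) :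
    dist x y ∈ Icc m M :=
  ⟨not_lt.1 fun h => hx.2 (interior_maximal hball isOpen_ball h),
    closure_minimal hsub isClosed_closedBall (frontier_subset_closure hx)⟩

theorem abs_sub_midpoint_le_of_mem_Icc {m M t : ℝ} (ht : t ∈ Icc m M) :
    |t - (m + M) / 2| ≤ (M - m) / 2 :=
  abs_le.2 ⟨by linarith [ht.1], by linarith [ht.2]⟩

section NormedSpace

variable {E : Type*} [NormedAddCommGroup E] [NormedSpace ℝ E]

theorem dist_add_smul_add_smul {u : E} (hu : ‖u‖ = 1) (y : E) (s t : ℝ) :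
    dist (y + s • u) (y + t • u) = |s - t| := by
  rw [dist_add_left, dist_eq_norm, ← sub_smul, norm_smul, hu, mul_one, Real.norm_eq_abs]

theorem dist_add_smul_left {u : E} (hu : ‖u‖ = 1) (y : E) (t : ℝ) :
    dist (y + t • u) y = |t| := by
  rw [dist_self_add_left, norm_smul, hu, mul_one, Real.norm_eq_abs]

theorem exists_norm_eq_one_eq_add_smul {x y : E} (hxy : x ≠ y) :
    ∃ u : E, ‖u‖ = 1 ∧ x = y + dist x y • u := by
  have hd : dist x y ≠ 0 := dist_ne_zero.2 hxy
  refine ⟨(dist x y)⁻¹ • (x - y), ?_, ?_⟩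
  · rw [norm_smul, norm_inv, Real.norm_eq_abs, abs_dist, ← dist_eq_norm, inv_mul_cancel₀ hd]
  · rw [smul_smul, mul_inv_cancel₀ hd, one_smul, add_sub_cancel]

theorem exists_nonneg_add_smul_mem_frontier {K : Set E} {y u : E} {M : ℝ} (hy : y ∈ K)
    (hsub : K ⊆ closedBall y M) (hu : ‖u‖ = 1) :
    ∃ t : ℝ, 0 ≤ t ∧ y + t • u ∈ frontier K := by
  have hM : 0 ≤ M := dist_self y ▸ hsub hy
  have hout : y + (M + 1) • u ∉ K := fun h => by
    have := hsub h
    rw [mem_closedBall, dist_add_smul_left hu, abs_of_nonneg (by linarith)] at this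
    linarith
  have hray : IsPreconnected ((fun t : ℝ => y + t • u) '' Ici 0) :=
    isPreconnected_Ici.image _ (by fun_prop)
  obtain ⟨_, ⟨t, ht, rfl⟩, hx⟩ := hray.inter_frontier_nonempty
    ⟨y, ⟨0, mem_Ici.2 le_rfl, by simp only [zero_smul, add_zero]⟩, hy⟩
    ⟨_, ⟨M + 1, by simp only [mem_Ici]; linarith, rfl⟩, hout⟩
  exact ⟨t, ht, hx⟩

variable {K : Set E} {y : E} {m M : ℝ}

theorem exists_mem_sphere_dist_le_of_mem_frontier (hm : 0 < m) (hball : ball y m ⊆ K)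
    (hsub : K ⊆ closedBall y M) {x : E} (hx : x ∈ frontier K) :
    ∃ z ∈ sphere y ((m + M) / 2), dist x z ≤ (M - m) / 2 := by
  have hxy := dist_mem_Icc_of_mem_frontier hball hsub hx
  obtain ⟨u, hu, hxu⟩ := exists_norm_eq_one_eq_add_smul (dist_pos.1 (hm.trans_le hxy.1))
  refine ⟨y + ((m + M) / 2) • u, ?_, ?_⟩
  · rw [mem_sphere, dist_add_smul_left hu, abs_of_nonneg (by linarith [hxy.1, hxy.2])]
  · rw [hxu, dist_add_smul_add_smul hu]
    exact abs_sub_midpoint_le_of_mem_Icc hxy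

theorem exists_mem_frontier_dist_le_of_mem_sphere (hm : 0 < m) (hmM : m ≤ M)
    (hball : closedBall y m ⊆ K) (hsub : K ⊆ closedBall y M) {z : E}
    (hz : z ∈ sphere y ((m + M) / 2)) :
    ∃ x ∈ frontier K, dist z x ≤ (M - m) / 2 := by
  have hzy : dist z y = (m + M) / 2 := hz
  obtain ⟨u, hu, hzu⟩ := exists_norm_eq_one_eq_add_smul (ne_of_mem_sphere hz (by linarith))
  obtain ⟨t, ht, hx⟩ := exists_nonneg_add_smul_mem_frontier
    (hball (mem_closedBall_self hm.le)) hsub hu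
  have htK := dist_mem_Icc_of_mem_frontier (ball_subset_closedBall.trans hball) hsub hx
  rw [dist_add_smul_left hu, abs_of_nonneg ht] at htK
  refine ⟨_, hx, ?_⟩
  rw [hzu, hzy, dist_add_smul_add_smul hu, abs_sub_comm]
  exact abs_sub_midpoint_le_of_mem_Icc htK

end NormedSpace

theorem stmt_10_general (n : ℕ)
    (K : Set (EuclideanSpace ℝ (Fin (n + 1))))
    (y : EuclideanSpace ℝ (Fin (n + 1))) (m M : ℝ)
    (hm : 0 < m) (hmM : m ≤ M)
    (hball : closedBall y m ⊆ K)
    (hsub : K ⊆ closedBall y M) :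
    (frontier K).Nonempty ∧ IsCompact (frontier K) ∧
    hausdorffDist (frontier K) (sphere y ((m + M) / 2)) ≤ (M - m) / 2 := by
  have hball' : ball y m ⊆ K := ball_subset_closedBall.trans hball
  obtain ⟨z, hz⟩ := (NormedSpace.sphere_nonempty (x := y)).2 (by linarith : 0 ≤ (m + M) / 2)
  obtain ⟨x, hx, -⟩ := exists_mem_frontier_dist_le_of_mem_sphere hm hmM hball hsub hz
  refine ⟨⟨x, hx⟩, ?_, ?_⟩
  · exact (isCompact_closedBall y M).of_isClosed_subset isClosed_frontier
      fun x hx => (dist_mem_Icc_of_mem_frontier hball' hsub hx).2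
  · exact hausdorffDist_le_of_mem_dist (by linarith)
      (fun _ => exists_mem_sphere_dist_le_of_mem_frontier hm hball' hsub)
      (fun _ => exists_mem_frontier_dist_le_of_mem_sphere hm hmM hball hsub)

/-- If a compact set `K ⊆ ℝ^{n+1}` is squeezed between concentric closed balls of radii
`0 < m ≤ M` around `y`, then `∂K` is a nonempty compact set whose Hausdorff distance to
the middle sphere of radius `(m + M)/2` around `y` is at most `(M - m)/2`. -/
theorem stmt_10 (n : ℕ) (hn : 1 ≤ n)
    (K : Set (EuclideanSpace ℝ (Fin (n + 1)))) (hK : IsCompact K)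
    (y : EuclideanSpace ℝ (Fin (n + 1))) (m M : ℝ)
    (hm : 0 < m) (hmM : m ≤ M)
    (hball : closedBall y m ⊆ K)
    (hsub : K ⊆ closedBall y M) :
    (frontier K).Nonempty ∧ IsCompact (frontier K) ∧
    hausdorffDist (frontier K) (sphere y ((m + M) / 2)) ≤ (M - m) / 2 :=
  stmt_10_general n K y m M hm hmM hball hsub
end

section
/- Let p be a real number with 0 < p < 1, let n ≥ 2 be an integer, and for t ≥ 0, r > 0 set R(t, r) = ((1−p)·n^{−p}·t + r^{1−p})^{1/(1−p)}, so that for each integer k ≥ 0 the map Rₖ : r ↦ R(k, r) is a strictly increasing bijection from (0, ∞) onto its range. Let (aₖ) and (bₖ) be sequences of real numbers with aₖ and bₖ in the range of Rₖ for every k, bₖ ≤ aₖ for every k, and aₖ − bₖ → 0 as k → ∞. If the sequence (Rₖ^{−1}(aₖ)) is non-increasing, then both sequences (Rₖ^{−1}(aₖ)) and (Rₖ^{−1}(bₖ)) converge, and they converge to the same limit R* ≥ 0. -/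
open Real Filter

private lemma rpow_add_le_add_rpow' {x y q : ℝ} (hx : 0 ≤ x) (hy : 0 ≤ y)
    (hq0 : 0 ≤ q) (hq1 : q ≤ 1) : (x + y) ^ q ≤ x ^ q + y ^ q := by
  lift x to NNReal using hx
  lift y to NNReal using hy
  have h := NNReal.rpow_add_le_add_rpow x y hq0 hq1
  have h' := NNReal.coe_le_coe.2 h
  push_cast at h'
  exact h'

/-- Selection of the optimal initial radius `R*`: for `0 < p < 1` let
`R(t,r) = ((1-p) n^{-p} t + r^{1-p})^{1/(1-p)}`, a strictly increasing bijection in `r`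
for fixed `t`. If `aₖ = R(k, αₖ)` and `bₖ = R(k, βₖ)` with `αₖ, βₖ > 0` (i.e. `aₖ, bₖ`
lie in the range of `Rₖ` with preimages `αₖ = Rₖ⁻¹(aₖ)`, `βₖ = Rₖ⁻¹(bₖ)`),
`bₖ ≤ aₖ`, `aₖ - bₖ → 0`, and `(αₖ)` is non-increasing, then `(αₖ)` and `(βₖ)`
converge to a common limit `R* ≥ 0`. -/
theorem stmt_13 (p : ℝ) (hp0 : 0 < p) (hp1 : p < 1) (n : ℕ) (hn : 2 ≤ n)
    (R : ℝ → ℝ → ℝ)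
    (hR : ∀ t r : ℝ, R t r = ((1 - p) * (n : ℝ) ^ (-p) * t + r ^ (1 - p)) ^ (1 / (1 - p)))
    (a b α β : ℕ → ℝ)
    (hα : ∀ k, 0 < α k) (hβ : ∀ k, 0 < β k)
    (haα : ∀ k : ℕ, R (k : ℝ) (α k) = a k) (hbβ : ∀ k : ℕ, R (k : ℝ) (β k) = b k)
    (hba : ∀ k, b k ≤ a k)
    (hdiff : Tendsto (fun k => a k - b k) atTop (nhds 0))
    (hmono : Antitone α) :
    ∃ Rstar : ℝ, 0 ≤ Rstar ∧
      Tendsto α atTop (nhds Rstar) ∧ Tendsto β atTop (nhds Rstar) := by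
  set q : ℝ := 1 - p with hqdef
  have hq : 0 < q := by simp only [hqdef]; linarith
  have hq' : q ≠ 0 := hq.ne'
  have hq1 : q ≤ 1 := by simp only [hqdef]; linarith
  have hn0 : (0:ℝ) < n := by positivity
  set c : ℝ := (1 - p) * (n : ℝ) ^ (-p) with hcdef
  have hc : 0 < c := by
    have : (0:ℝ) < (n : ℝ) ^ (-p) := Real.rpow_pos_of_pos hn0 _
    have h1p : (0:ℝ) < 1 - p := by linarith
    positivity
  -- key algebraic identity
  have key : ∀ (k : ℕ) (r : ℝ), 0 < r → (R (k : ℝ) r) ^ q = c * k + r ^ q := by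
    intro k r hr
    have hr' : (0:ℝ) ≤ r ^ q := Real.rpow_nonneg hr.le _
    have h1 : (0:ℝ) ≤ c * k + r ^ q := by positivity
    rw [hR, one_div, Real.rpow_inv_rpow h1 hq']
  have haq : ∀ k, a k ^ q = c * k + α k ^ q := fun k => by
    rw [← haα k, key k _ (hα k)]
  have hbq : ∀ k, b k ^ q = c * k + β k ^ q := fun k => by
    rw [← hbβ k, key k _ (hβ k)]
  have ha0 : ∀ k, 0 ≤ a k := by
    intro k
    rw [← haα k, hR]
    have h1 : (0:ℝ) ≤ α k ^ q := Real.rpow_nonneg (hα k).le _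
    have h2 : (0:ℝ) ≤ c * k := by positivity
    exact Real.rpow_nonneg (by linarith) _
  have hb0 : ∀ k, 0 ≤ b k := by
    intro k
    rw [← hbβ k, hR]
    have h1 : (0:ℝ) ≤ β k ^ q := Real.rpow_nonneg (hβ k).le _
    have h2 : (0:ℝ) ≤ c * k := by positivity
    exact Real.rpow_nonneg (by linarith) _
  -- α converges to its infimum
  have hbdd : BddBelow (Set.range α) := ⟨0, by rintro x ⟨k, rfl⟩; exact (hα k).le⟩
  refine ⟨⨅ k, α k, le_ciInf fun k => (hα k).le, tendsto_atTop_ciInf hmono hbdd, ?_⟩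
  set Rstar : ℝ := ⨅ k, α k with hRs
  have hRs0 : 0 ≤ Rstar := le_ciInf fun k => (hα k).le
  have hαlim : Tendsto α atTop (nhds Rstar) := tendsto_atTop_ciInf hmono hbdd
  -- a^q - b^q → 0 by squeeze
  have hsub : ∀ k, a k ^ q - b k ^ q ≤ (a k - b k) ^ q := by
    intro k
    have h : a k ^ q ≤ (a k - b k) ^ q + b k ^ q := by
      have := rpow_add_le_add_rpow' (x := a k - b k) (y := b k)
        (by linarith [hba k]) (hb0 k) hq.le hq1
      rwa [sub_add_cancel] at this
    linarith
  have hlow : ∀ k, 0 ≤ a k ^ q - b k ^ q := by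
    intro k
    have := Real.rpow_le_rpow (hb0 k) (hba k) hq.le
    linarith
  have hupper : Tendsto (fun k => (a k - b k) ^ q) atTop (nhds 0) := by
    have := hdiff.rpow_const (p := q) (Or.inr hq.le)
    rwa [Real.zero_rpow hq'] at this
  have hqdiff : Tendsto (fun k => a k ^ q - b k ^ q) atTop (nhds 0) :=
    tendsto_of_tendsto_of_tendsto_of_le_of_le tendsto_const_nhds hupper hlow hsub
  -- β^q → Rstar^q
  have hαq : Tendsto (fun k => α k ^ q) atTop (nhds (Rstar ^ q)) :=
    hαlim.rpow_const (Or.inr hq.le)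
  have hβqeq : ∀ k, β k ^ q = α k ^ q - (a k ^ q - b k ^ q) := by
    intro k
    have h1 := haq k
    have h2 := hbq k
    linarith
  have hβq : Tendsto (fun k => β k ^ q) atTop (nhds (Rstar ^ q)) := by
    have := hαq.sub hqdiff
    rw [sub_zero] at this
    simpa only [hβqeq] using this
  -- β → Rstar
  have hfinal := hβq.rpow_const (p := q⁻¹) (Or.inr (by positivity))
  rw [Real.rpow_rpow_inv hRs0 hq'] at hfinal
  have : (fun k => (β k ^ q) ^ q⁻¹) = β := by
    funext k
    exact Real.rpow_rpow_inv (hβ k).le hq'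
  rwa [this] at hfinal
end
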